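/- arXiv:1606.05172 — 3 statements merged into one kernel-verified Lean document; each statement's English description precedes it below -/
import Mathlib

section
/- If f : {0,1}^n → {0,1}^n has an acyclic interaction graph, with unique fixed point y, then for every configuration x the asynchronous graph Γ(f) contains a path from x to y of length exactly the Hamming distance d_H(x,y) (a geodesic). -/
/-- One asynchronous update step of the Boolean network `f`. -/
def Step {I : Type*} [DecidableEq I] (f : (I → Bool) → I → Bool) (x y : I → Bool) : Prop :=
  ∃ i, f x i ≠ x i ∧ y = Function.update x i (f x i)

/-- `Γ(f)` has a path from `x` to `y` of length `l`. -/
def PathLen {I : Type*} [DecidableEq I] (f : (I → Bool) → I → Bool)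
    (x y : I → Bool) (l : ℕ) : Prop :=
  ∃ p : ℕ → I → Bool, p 0 = x ∧ p l = y ∧ ∀ k < l, Step f (p k) (p (k + 1))

/-- Positive arc from `j` to `i` in the interaction graph `G(f)`. -/
def PosArc {n : ℕ} (f : (Fin n → Bool) → Fin n → Bool) (j i : Fin n) : Prop :=
  ∃ x, f (Function.update x j true) i = true ∧ f (Function.update x j false) i = false

/-- Negative arc from `j` to `i` in the interaction graph `G(f)`. -/
def NegArc {n : ℕ} (f : (Fin n → Bool) → Fin n → Bool) (j i : Fin n) : Prop :=
  ∃ x, f (Function.update x j true) i = false ∧ f (Function.update x j false) i = true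

/-- Arc in the underlying unsigned digraph of `G(f)`. -/
def Arc {n : ℕ} (f : (Fin n → Bool) → Fin n → Bool) (j i : Fin n) : Prop :=
  PosArc f j i ∨ NegArc f j i

/-- The interaction graph `G(f)` is acyclic (no directed cycle, including loops). -/
def AcyclicIG {n : ℕ} (f : (Fin n → Bool) → Fin n → Bool) : Prop :=
  ∀ i, ¬ Relation.TransGen (Arc f) i i

/-- Hamming distance. -/
def ham {n : ℕ} (x y : Fin n → Bool) : ℕ :=
  (Finset.univ.filter fun i => x i ≠ y i).card

/-- Componentwise negation. -/
def negc {n : ℕ} (x : Fin n → Bool) : Fin n → Bool := fun i => !(x i)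

/-- Number of ones (weight). -/
def wt {n : ℕ} (x : Fin n → Bool) : ℕ :=
  (Finset.univ.filter fun i => x i = true).card

/-- `x` with coordinate `i` flipped. -/
def flipAt {n : ℕ} (x : Fin n → Bool) (i : Fin n) : Fin n → Bool :=
  Function.update x i (!(x i))

/-- `G(f)` has no negative loops. -/
def NoNegLoop {n : ℕ} (f : (Fin n → Bool) → Fin n → Bool) : Prop :=
  ∀ i, ¬ NegArc f i i

/-- First-half components of the embedding construction `f'`. -/
def F1 {n : ℕ} (f : (Fin n → Bool) → Fin n → Bool) (x y : Fin n → Bool) (i : Fin n) : Bool :=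
  if y = negc x ∨ flipAt y i = negc x then f x i
  else if wt x + wt y = n then !(x i)
  else if wt x + wt y = n + 1 then true
  else if wt x + wt y + 1 = n then false
  else if n + 2 ≤ wt x + wt y then true
  else false

/-- The embedding construction `f' : {0,1}^{2n} → {0,1}^{2n}`, with the `2n`
coordinates indexed by `Fin n ⊕ Fin n`. -/
def Fext {n : ℕ} (f : (Fin n → Bool) → Fin n → Bool) (z : (Fin n ⊕ Fin n) → Bool) :
    (Fin n ⊕ Fin n) → Bool :=
  Sum.elim (fun i => F1 f (z ∘ Sum.inl) (z ∘ Sum.inr) i)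
           (fun i => !(F1 f (negc (z ∘ Sum.inr)) (negc (z ∘ Sum.inl)) i))

/-- Concatenation `(x, y) ∈ {0,1}^{2n}`. -/
def pair {n : ℕ} (x y : Fin n → Bool) : (Fin n ⊕ Fin n) → Bool := Sum.elim x y

/-
A coordinate `m` of `x` that differs from `y` and is minimal for the (well-founded) order
generated by the acyclic interaction graph has no in-neighbour among the coordinates where `x`
and `y` differ. Hence `f x m = f y m = y m`: updating `m` is an arc of `Γ(f)` that reduces the
Hamming distance to `y` by one, and iterating gives a geodesic.
-/

theorem Function.apply_eq_of_update_invariant {I β γ : Type*} [DecidableEq I]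
    {g : (I → β) → γ} (s : Finset I) (hg : ∀ j ∈ s, ∀ x b, g (Function.update x j b) = g x)
    {x z : I → β} (hxz : ∀ j ∉ s, x j = z j) : g x = g z := by
  induction s using Finset.induction_on generalizing x with
  | empty => exact congrArg g (funext fun j => hxz j (Finset.notMem_empty j))
  | insert a s ha ih =>
    calc g x = g (Function.update x a (z a)) := (hg a (Finset.mem_insert_self a s) x _).symm
      _ = g z := by
        refine ih (fun j hj x b => hg j (Finset.mem_insert_of_mem hj) x b) fun j hj => ?_
        by_cases hja : j = a
        · subst hja; simp
        · simpa [hja] using hxz j (by simp [hja, hj])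

theorem PathLen.zero {I : Type*} [DecidableEq I] (f : (I → Bool) → I → Bool) (x : I → Bool) :
    PathLen f x x 0 :=
  ⟨fun _ => x, rfl, rfl, fun _ hk => absurd hk (Nat.not_lt_zero _)⟩

theorem PathLen.cons {I : Type*} [DecidableEq I] {f : (I → Bool) → I → Bool}
    {x x' y : I → Bool} {l : ℕ} (h : Step f x x') (hp : PathLen f x' y l) :
    PathLen f x y (l + 1) := by
  obtain ⟨p, hp0, hpl, hps⟩ := hp
  refine ⟨fun k => match k with | 0 => x | k + 1 => p k, rfl, hpl, ?_⟩
  rintro (_ | k) hk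
  · simpa [hp0] using h
  · exact hps k (by omega)

section Hamming

variable {n : ℕ}

theorem ham_eq_zero_iff {x y : Fin n → Bool} : ham x y = 0 ↔ x = y := by
  simp [ham, Finset.filter_eq_empty_iff, funext_iff]

theorem ham_update_add_one {x y : Fin n → Bool} {m : Fin n} (hm : x m ≠ y m) :
    ham (Function.update x m (y m)) y + 1 = ham x y := by
  have hfilter : (Finset.univ.filter fun j => Function.update x m (y m) j ≠ y j)
      = (Finset.univ.filter fun j => x j ≠ y j).erase m := by
    ext j
    by_cases hjm : j = m <;> simp [Function.update, hjm]
  rw [ham, hfilter, Finset.card_erase_add_one (by simpa using hm), ham]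

end Hamming

section InteractionGraph

variable {n : ℕ} {f : (Fin n → Bool) → Fin n → Bool}

theorem apply_update_eq_of_not_arc {j i : Fin n} (h : ¬ Arc f j i) (x : Fin n → Bool)
    (b : Bool) : f (Function.update x j b) i = f x i := by
  have hflat : ∀ z : Fin n → Bool,
      f (Function.update z j true) i = f (Function.update z j false) i := by
    intro z
    by_contra hne
    apply h
    cases h1 : f (Function.update z j true) i <;> cases h2 : f (Function.update z j false) i
    · exact absurd (h1.trans h2.symm) hne
    · exact Or.inr ⟨z, h1, h2⟩
    · exact Or.inl ⟨z, h1, h2⟩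
    · exact absurd (h1.trans h2.symm) hne
  conv_rhs => rw [← Function.update_eq_self j x]
  cases b <;> cases x j <;> simp [hflat x]

theorem apply_eq_of_not_arc_of_ne {i : Fin n} {x y : Fin n → Bool}
    (h : ∀ j, x j ≠ y j → ¬ Arc f j i) : f x i = f y i :=
  Function.apply_eq_of_update_invariant (g := fun x => f x i)
    (Finset.univ.filter fun j => x j ≠ y j)
    (fun j hj => apply_update_eq_of_not_arc (h j (by simpa using hj)))
    (fun j hj => by simpa using hj)

theorem AcyclicIG.wellFounded (hG : AcyclicIG f) : WellFounded (Relation.TransGen (Arc f)) :=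
  haveI : Std.Irrefl (Relation.TransGen (Arc f)) := ⟨hG⟩
  Finite.wellFounded_of_trans_of_irrefl _

theorem AcyclicIG.exists_apply_eq_fixedPoint (hG : AcyclicIG f) {x y : Fin n → Bool}
    (hy : f y = y) (hxy : x ≠ y) : ∃ m, x m ≠ y m ∧ f x m = y m := by
  obtain ⟨m, hm, hmin⟩ := hG.wellFounded.has_min {j | x j ≠ y j}
    (Function.ne_iff.mp hxy)
  refine ⟨m, hm, ?_⟩
  rw [apply_eq_of_not_arc_of_ne fun j hj ha => hmin j hj (.single ha), hy]

end InteractionGraph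

theorem stmt_2_general {n : ℕ} (f : (Fin n → Bool) → Fin n → Bool)
    (hG : AcyclicIG f) (y : Fin n → Bool) (hy : f y = y) :
    ∀ x, PathLen f x y (ham x y) := by
  suffices h : ∀ k x, ham x y = k → PathLen f x y k from fun x => h _ x rfl
  intro k
  induction k with
  | zero => intro x hx; rw [ham_eq_zero_iff.mp hx]; exact PathLen.zero f y
  | succ k ih =>
    intro x hx
    obtain ⟨m, hm, hfm⟩ := hG.exists_apply_eq_fixedPoint (x := x) hy
      (by rintro rfl; rw [ham_eq_zero_iff.mpr rfl] at hx; omega)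
    have hstep : Step f x (Function.update x m (y m)) := ⟨m, hfm ▸ hm.symm, by rw [hfm]⟩
    have hdist := ham_update_add_one hm
    exact PathLen.cons hstep (ih _ (by omega))

theorem stmt_2 {n : ℕ} (f : (Fin n → Bool) → Fin n → Bool)
    (hG : AcyclicIG f) (y : Fin n → Bool) (hy : f y = y)
    (huniq : ∀ z, f z = z → z = y) :
    ∀ x, PathLen f x y (ham x y) :=
  stmt_2_general f hG y hy
end

section
/- With f' constructed from f as in the embedding construction, if the asynchronous graph Γ(f') has a path from a configuration (x,y) to some configuration of the form (z, z̄), then n − 1 ≤ w(x) + w(y) ≤ n + 1. -/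
lemma wt_update {n : ℕ} (y : Fin n → Bool) (j : Fin n) (b : Bool) :
    wt (Function.update y j b) + (if y j then 1 else 0) = wt y + (if b then 1 else 0) := by
  unfold wt
  rw [Finset.card_filter, Finset.card_filter,
    ← Finset.sum_erase_add _ _ (Finset.mem_univ j),
    ← Finset.sum_erase_add _ _ (Finset.mem_univ j)]
  have h1 : ∀ i ∈ Finset.univ.erase j,
      (if Function.update y j b i = true then 1 else 0) = (if y i = true then 1 else 0) := by
    intro i hi
    rw [Function.update_of_ne (Finset.ne_of_mem_erase hi)]
  rw [Finset.sum_congr rfl h1]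
  cases b <;> cases hy : y j <;> simp [hy]

lemma wt_add_wt_negc {n : ℕ} (x : Fin n → Bool) : wt x + wt (negc x) = n := by
  unfold wt negc
  have h : (Finset.univ.filter fun i => (!(x i)) = true)
      = Finset.univ.filter fun i => ¬ (x i = true) := by
    apply Finset.filter_congr; intro i _; cases x i <;> simp
  rw [h, Finset.card_filter_add_card_filter_not]
  simp

lemma flip_sum {n : ℕ} (x y : Fin n → Bool) (j : Fin n) (h : flipAt y j = negc x) :
    wt x + wt y = n + 1 ∨ wt x + wt y + 1 = n := by
  unfold flipAt at h
  have h1 := wt_update y j (!(y j))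
  have h2 : wt x + wt (Function.update y j (!(y j))) = n := by
    rw [h]; exact wt_add_wt_negc x
  set w := wt (Function.update y j (!(y j))) with hwdef
  cases hy : y j <;> rw [hy] at h1 <;> simp at h1 <;> omega

lemma F1_high {n : ℕ} (f : (Fin n → Bool) → Fin n → Bool) (x y : Fin n → Bool) (j : Fin n)
    (hw : n + 2 ≤ wt x + wt y) : F1 f x y j = true := by
  have h1 : ¬(y = negc x ∨ flipAt y j = negc x) := by
    rintro (h | h)
    · have h2 : wt x + wt y = n := by rw [h]; exact wt_add_wt_negc x
      omega
    · rcases flip_sum x y j h with h' | h' <;> omega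
  unfold F1
  rw [if_neg h1, if_neg (by omega), if_neg (by omega), if_neg (by omega), if_pos hw]

lemma F1_low {n : ℕ} (f : (Fin n → Bool) → Fin n → Bool) (x y : Fin n → Bool) (j : Fin n)
    (hw : wt x + wt y + 2 ≤ n) : F1 f x y j = false := by
  have h1 : ¬(y = negc x ∨ flipAt y j = negc x) := by
    rintro (h | h)
    · have h2 : wt x + wt y = n := by rw [h]; exact wt_add_wt_negc x
      omega
    · rcases flip_sum x y j h with h' | h' <;> omega
  unfold F1
  rw [if_neg h1, if_neg (by omega), if_neg (by omega), if_neg (by omega), if_neg (by omega)]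

/-- Sum of weights of the two halves. -/
def swt {n : ℕ} (u : (Fin n ⊕ Fin n) → Bool) : ℕ :=
  wt (u ∘ Sum.inl) + wt (u ∘ Sum.inr)

lemma fext_high {n : ℕ} (f : (Fin n → Bool) → Fin n → Bool) (u : (Fin n ⊕ Fin n) → Bool)
    (hw : n + 2 ≤ swt u) (i : Fin n ⊕ Fin n) : Fext f u i = true := by
  unfold swt at hw
  cases i with
  | inl j => exact F1_high f _ _ j hw
  | inr j =>
    show (!(F1 f (negc (u ∘ Sum.inr)) (negc (u ∘ Sum.inl)) j)) = true
    have a := wt_add_wt_negc (u ∘ Sum.inl)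
    have b := wt_add_wt_negc (u ∘ Sum.inr)
    rw [F1_low f _ _ j (by omega)]
    rfl

lemma fext_low {n : ℕ} (f : (Fin n → Bool) → Fin n → Bool) (u : (Fin n ⊕ Fin n) → Bool)
    (hw : swt u + 2 ≤ n) (i : Fin n ⊕ Fin n) : Fext f u i = false := by
  unfold swt at hw
  cases i with
  | inl j => exact F1_low f _ _ j hw
  | inr j =>
    show (!(F1 f (negc (u ∘ Sum.inr)) (negc (u ∘ Sum.inl)) j)) = false
    have a := wt_add_wt_negc (u ∘ Sum.inl)
    have b := wt_add_wt_negc (u ∘ Sum.inr)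
    rw [F1_high f _ _ j (by omega)]
    rfl

lemma upd_comp_inl_inl {n : ℕ} (u : (Fin n ⊕ Fin n) → Bool) (j : Fin n) (b : Bool) :
    (Function.update u (Sum.inl j) b) ∘ Sum.inl = Function.update (u ∘ Sum.inl) j b := by
  funext i; simp [Function.update_apply, Sum.inl.injEq]
lemma upd_comp_inl_inr {n : ℕ} (u : (Fin n ⊕ Fin n) → Bool) (j : Fin n) (b : Bool) :
    (Function.update u (Sum.inl j) b) ∘ Sum.inr = u ∘ Sum.inr := by
  funext i; simp [Function.update_apply]
lemma upd_comp_inr_inr {n : ℕ} (u : (Fin n ⊕ Fin n) → Bool) (j : Fin n) (b : Bool) :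
    (Function.update u (Sum.inr j) b) ∘ Sum.inr = Function.update (u ∘ Sum.inr) j b := by
  funext i; simp [Function.update_apply, Sum.inr.injEq]
lemma upd_comp_inr_inl {n : ℕ} (u : (Fin n ⊕ Fin n) → Bool) (j : Fin n) (b : Bool) :
    (Function.update u (Sum.inr j) b) ∘ Sum.inl = u ∘ Sum.inl := by
  funext i; simp [Function.update_apply]

lemma swt_update {n : ℕ} (u : (Fin n ⊕ Fin n) → Bool) (i : Fin n ⊕ Fin n) (b : Bool) :
    swt (Function.update u i b) + (if u i then 1 else 0) = swt u + (if b then 1 else 0) := by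
  cases i with
  | inl j =>
    unfold swt
    rw [upd_comp_inl_inl, upd_comp_inl_inr]
    have := wt_update (u ∘ Sum.inl) j b
    simp only [Function.comp_apply] at this
    omega
  | inr j =>
    unfold swt
    rw [upd_comp_inr_inl, upd_comp_inr_inr]
    have := wt_update (u ∘ Sum.inr) j b
    simp only [Function.comp_apply] at this
    omega

lemma step_high {n : ℕ} (f : (Fin n → Bool) → Fin n → Bool) {u v : (Fin n ⊕ Fin n) → Bool}
    (hs : Step (Fext f) u v) (hw : n + 2 ≤ swt u) : n + 2 ≤ swt v := by
  obtain ⟨i, hne, hv⟩ := hs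
  have ht := fext_high f u hw i
  have hui : u i = false := by
    cases h : u i
    · rfl
    · exact absurd (ht.trans h.symm) hne
  subst hv
  rw [ht]
  have h2 := swt_update u i true
  rw [hui] at h2
  simp at h2
  omega

lemma step_low {n : ℕ} (f : (Fin n → Bool) → Fin n → Bool) {u v : (Fin n ⊕ Fin n) → Bool}
    (hs : Step (Fext f) u v) (hw : swt u + 2 ≤ n) : swt v + 2 ≤ n := by
  obtain ⟨i, hne, hv⟩ := hs
  have ht := fext_low f u hw i
  have hui : u i = true := by
    cases h : u i
    · exact absurd (ht.trans h.symm) hne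
    · rfl
  subst hv
  rw [ht]
  have h2 := swt_update u i false
  rw [hui] at h2
  simp at h2
  omega

theorem stmt_9 {n : ℕ} (f : (Fin n → Bool) → Fin n → Bool)
    (x y : Fin n → Bool)
    (h : ∃ z, Relation.ReflTransGen (Step (Fext f)) (pair x y) (pair z (negc z))) :
    n ≤ wt x + wt y + 1 ∧ wt x + wt y ≤ n + 1 := by
  obtain ⟨z, hp⟩ := h
  have inv_high : ∀ {a b : (Fin n ⊕ Fin n) → Bool},
      Relation.ReflTransGen (Step (Fext f)) a b → n + 2 ≤ swt a → n + 2 ≤ swt b := by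
    intro a b hab
    induction hab with
    | refl => exact id
    | tail _ hstep ih => intro ha; exact step_high f hstep (ih ha)
  have inv_low : ∀ {a b : (Fin n ⊕ Fin n) → Bool},
      Relation.ReflTransGen (Step (Fext f)) a b → swt a + 2 ≤ n → swt b + 2 ≤ n := by
    intro a b hab
    induction hab with
    | refl => exact id
    | tail _ hstep ih => intro ha; exact step_low f hstep (ih ha)
  have hxy : swt (pair x y) = wt x + wt y := rfl
  have hz : swt (pair z (negc z)) = wt z + wt (negc z) := rfl
  have hzn := wt_add_wt_negc z
  constructor
  · by_contra hc
    have h1 : swt (pair x y) + 2 ≤ n := by omega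
    have := inv_low hp h1
    omega
  · by_contra hc
    have h1 : n + 2 ≤ swt (pair x y) := by omega
    have := inv_high hp h1
    omega
end

section
/- Let f have no negative loops and f' be the embedding construction. For all x, y ∈ {0,1}^n, any path in Γ(f') from (x, x̄) to (y, ȳ) with no internal vertex in Ω = {(z,z̄) : z ∈ {0,1}^n} is either (x,x̄) → (y,x̄) → (y,ȳ) or (x,x̄) → (x,ȳ) → (y,ȳ), and such a path exists if and only if x → y is a transition of Γ(f). -/
/-!
On Ω the network `f'` acts as `f` does, so a move out of `(x, x̄)` flips one coordinate `i` with
`f_i(x) ≠ x_i`, in either half, and the halves of the new vertex agree exactly at `i`. From there,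
flipping the other half at `i` completes the move to `(x^i, x̄^i) ∈ Ω`, while flipping the same half
back would make `f_i` decreasing in `x_i`, a negative loop. Any other move makes the halves agree
at a second coordinate, with the same value `c` as at `i`. Such vertices are trapped: their weight
`w(x) + w(y)` differs from `n` and they are not adjacent to Ω, so every component of `f'` equals `c`
there, moves only set coordinates to `c`, and Ω is never reached again.
-/

open Function Finset Sum

section
variable {n : ℕ}

@[simp] lemma negc_apply (x : Fin n → Bool) (i : Fin n) : negc x i = !x i := rfl

@[simp] lemma negc_negc (x : Fin n → Bool) : negc (negc x) = x := by
  funext i; simp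

lemma negc_flipAt (x : Fin n → Bool) (i : Fin n) : negc (flipAt x i) = flipAt (negc x) i := by
  funext k; by_cases hk : k = i <;> simp [flipAt, update_apply, hk]

lemma flipAt_flipAt (x : Fin n → Bool) (i : Fin n) : flipAt (flipAt x i) i = x := by
  simp [flipAt]

lemma update_eq_flipAt {x : Fin n → Bool} {i : Fin n} {b : Bool} (hb : b ≠ x i) :
    update x i b = flipAt x i := by
  rw [flipAt, Bool.eq_not_iff.2 hb]

lemma wt_add_wt (u v : Fin n → Bool) :
    wt u + wt v + #(univ.filter fun i => u i = false ∧ v i = false)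
      = n + #(univ.filter fun i => u i = true ∧ v i = true) := by
  simp only [wt, card_filter, ← sum_add_distrib]
  rw [sum_congr rfl fun i _ => show _ = 1 + if u i = true ∧ v i = true then 1 else 0 by
    cases u i <;> cases v i <;> rfl, sum_add_distrib]
  simp

lemma lt_wt_add_wt {u v : Fin n → Bool} (hc : ∀ k, u k = v k → u k = true) {j : Fin n}
    (hj : u j = v j) : n < wt u + wt v := by
  have hfalse : univ.filter (fun i => u i = false ∧ v i = false) = ∅ :=
    filter_false_of_mem fun k _ ⟨hu, hv⟩ => by simpa [hu] using hc k (hu.trans hv.symm)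
  have htrue : 0 < #(univ.filter fun i => u i = true ∧ v i = true) :=
    card_pos.2 ⟨j, by simpa [← hj] using hc j hj⟩
  have := wt_add_wt u v
  rw [hfalse, card_empty] at this
  omega

lemma wt_add_wt_lt {u v : Fin n → Bool} (hc : ∀ k, u k = v k → u k = false) {j : Fin n}
    (hj : u j = v j) : wt u + wt v < n := by
  have htrue : univ.filter (fun i => u i = true ∧ v i = true) = ∅ :=
    filter_false_of_mem fun k _ ⟨hu, hv⟩ => by simpa [hu] using hc k (hu.trans hv.symm)
  have hfalse : 0 < #(univ.filter fun i => u i = false ∧ v i = false) :=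
    card_pos.2 ⟨j, by simpa [← hj] using hc j hj⟩
  have := wt_add_wt u v
  rw [htrue, card_empty] at this
  omega

lemma NoNegLoop.apply_flipAt {f : (Fin n → Bool) → Fin n → Bool} (hf : NoNegLoop f)
    {x : Fin n → Bool} {i : Fin n} (hi : f x i ≠ x i) : f (flipAt x i) i = f x i := by
  by_contra h
  have hx : update x i (x i) = x := update_eq_self i x
  have hflip : update x i (!x i) = flipAt x i := rfl
  have hfx : f x i = !x i := Bool.eq_not_iff.2 hi
  -- otherwise `f_i` takes the value `¬x_i` at `x` and `x_i` at `flipAt x i`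
  refine hf i ⟨x, ?_⟩
  cases hxi : x i <;> simp only [hxi, Bool.not_false, Bool.not_true] at hx hflip hfx <;>
    rw [hflip, hx] <;> simp_all

variable {f : (Fin n → Bool) → Fin n → Bool}

lemma F1_eq_of_agree {u v : Fin n → Bool} {c : Bool} (hc : ∀ k, u k = v k → u k = c)
    {i j : Fin n} (hj : u j = v j) (hji : j ≠ i) : F1 f u v i = c := by
  have hfar : ¬ (v = negc u ∨ flipAt v i = negc u) := by
    rintro (h | h) <;> simpa [flipAt, update_of_ne hji, hj] using congrFun h j
  rw [F1, if_neg hfar]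
  cases c
  · have := wt_add_wt_lt hc hj
    split_ifs <;> first | rfl | omega
  · have := lt_wt_add_wt hc hj
    split_ifs <;> first | rfl | omega

lemma F1_flipAt_left (x : Fin n → Bool) (i : Fin n) :
    F1 f (flipAt x i) (negc x) i = f (flipAt x i) i :=
  if_pos (.inr (negc_flipAt x i).symm)

lemma F1_flipAt_right (x : Fin n → Bool) (i : Fin n) :
    F1 f x (flipAt (negc x) i) i = f x i :=
  if_pos (.inr (flipAt_flipAt _ i))

lemma Fext_pair_negc (x : Fin n → Bool) :
    Fext f (pair x (negc x)) = pair (f x) (negc (f x)) := by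
  have hF1 : F1 f x (negc x) = f x := funext fun i => if_pos (.inl rfl)
  funext w
  rcases w with i | i
  · exact congrFun hF1 i
  · show (!F1 f (negc (negc x)) (negc x) i) = !f x i
    rw [negc_negc, hF1]

def agreeSet (z : Fin n ⊕ Fin n → Bool) : Finset (Fin n) :=
  univ.filter fun i => z (inl i) = z (inr i)

lemma mem_agreeSet {z : Fin n ⊕ Fin n → Bool} {i : Fin n} :
    i ∈ agreeSet z ↔ z (inl i) = z (inr i) := by
  simp [agreeSet]

lemma agreeSet_pair (u v : Fin n → Bool) :
    agreeSet (pair u v) = univ.filter fun i => u i = v i := rfl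

lemma agreeSet_pair_negc (y : Fin n → Bool) : agreeSet (pair y (negc y)) = ∅ := by
  simp [agreeSet_pair]

lemma ne_pair_negc_of_mem_agreeSet {z : Fin n ⊕ Fin n → Bool} {i : Fin n}
    (hi : i ∈ agreeSet z) (y : Fin n → Bool) : z ≠ pair y (negc y) := by
  rintro rfl
  simp [agreeSet_pair_negc] at hi

lemma agreeSet_pair_flipAt_left (x : Fin n → Bool) (i : Fin n) :
    agreeSet (pair (flipAt x i) (negc x)) = {i} := by
  ext k; rw [agreeSet_pair]; by_cases hk : k = i <;> simp [flipAt, update_apply, hk]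

lemma agreeSet_pair_flipAt_right (x : Fin n → Bool) (i : Fin n) :
    agreeSet (pair x (flipAt (negc x) i)) = {i} := by
  ext k; rw [agreeSet_pair]; by_cases hk : k = i <;> simp [flipAt, update_apply, hk]

lemma pair_flipAt_left_ne_pair_negc (x : Fin n → Bool) (i : Fin n) (y : Fin n → Bool) :
    pair (flipAt x i) (negc x) ≠ pair y (negc y) :=
  ne_pair_negc_of_mem_agreeSet (i := i) (by simp [agreeSet_pair_flipAt_left]) y

lemma pair_flipAt_right_ne_pair_negc (x : Fin n → Bool) (i : Fin n) (y : Fin n → Bool) :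
    pair x (flipAt (negc x) i) ≠ pair y (negc y) :=
  ne_pair_negc_of_mem_agreeSet (i := i) (by simp [agreeSet_pair_flipAt_right]) y

def EachPairHas (c : Bool) (z : Fin n ⊕ Fin n → Bool) : Prop :=
  ∀ i, z (inl i) = c ∨ z (inr i) = c

lemma eachPairHas_of_agreeSet_eq_singleton {z : Fin n ⊕ Fin n → Bool} {i : Fin n}
    (h : agreeSet z = {i}) : EachPairHas (z (inl i)) z := by
  intro k
  rcases eq_or_ne k i with rfl | hk
  · exact .inl rfl
  · have : z (inl k) ≠ z (inr k) := by simpa [← mem_agreeSet, h] using hk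
    cases h1 : z (inl k) <;> cases h2 : z (inr k) <;> cases h3 : z (inl i) <;> simp_all

lemma EachPairHas.update {c : Bool} {z : Fin n ⊕ Fin n → Bool} (hz : EachPairHas c z)
    (w : Fin n ⊕ Fin n) : EachPairHas c (Function.update z w c) := fun k => by
  grind [update_apply, EachPairHas]

lemma EachPairHas.agreeSet_ssubset_update {c : Bool} {z : Fin n ⊕ Fin n → Bool}
    (hz : EachPairHas c z) {w : Fin n ⊕ Fin n} (hw : z w ≠ c) :
    agreeSet z ⊂ agreeSet (Function.update z w c) := by
  refine ssubset_iff_of_subset (fun k hk => ?_) |>.2 ?_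
  · rw [mem_agreeSet] at hk ⊢
    have := hz k
    grind [update_apply]
  · rcases w with i | i <;> refine ⟨i, ?_, ?_⟩ <;> simp only [mem_agreeSet] <;> have := hz i <;>
      grind [update_apply]

lemma Fext_eq_of_eachPairHas {c : Bool}
    {z : Fin n ⊕ Fin n → Bool} (hz : EachPairHas c z) {j : Fin n} (hj : j ∈ agreeSet z)
    {w : Fin n ⊕ Fin n} (hwl : w ≠ inl j) (hwr : w ≠ inr j) : Fext f z w = c := by
  rw [mem_agreeSet] at hj
  rcases w with i | i
  · have hc : ∀ k, z (inl k) = z (inr k) → z (inl k) = c := fun k hk =>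
      (hz k).elim id hk.trans
    exact F1_eq_of_agree hc hj (by rintro rfl; simp at hwl)
  · have hc : ∀ k, negc (z ∘ inr) k = negc (z ∘ inl) k → negc (z ∘ inr) k = !c := fun k hk => by
      simp only [negc_apply, comp_apply, Bool.not_inj_iff] at hk ⊢
      exact (hz k).elim hk.trans id
    show (!F1 f (negc (z ∘ inr)) (negc (z ∘ inl)) i) = c
    rw [F1_eq_of_agree (j := j) hc (by simp [hj]) (by rintro rfl; simp at hwr), Bool.not_not]

def Trapped (c : Bool) (z : Fin n ⊕ Fin n → Bool) : Prop :=
  EachPairHas c z ∧ 2 ≤ #(agreeSet z)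

lemma trapped_of_step_of_mem_agreeSet {c : Bool} {z : Fin n ⊕ Fin n → Bool}
    (hz : EachPairHas c z) {j : Fin n} (hj : j ∈ agreeSet z) {w : Fin n ⊕ Fin n}
    (hwl : w ≠ inl j) (hwr : w ≠ inr j) (hw : Fext f z w ≠ z w) :
    Trapped c (update z w (Fext f z w)) := by
  rw [Fext_eq_of_eachPairHas hz hj hwl hwr] at hw ⊢
  have := card_lt_card (hz.agreeSet_ssubset_update hw.symm)
  have := card_pos.2 ⟨j, hj⟩
  exact ⟨hz.update w, by omega⟩

lemma Trapped.step {c : Bool} {z z' : Fin n ⊕ Fin n → Bool} (hz : Trapped c z)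
    (h : Step (Fext f) z z') : Trapped c z' := by
  obtain ⟨w, hw, rfl⟩ := h
  obtain ⟨j, hj, hwl, hwr⟩ : ∃ j ∈ agreeSet z, w ≠ inl j ∧ w ≠ inr j := by
    rcases w with i | i <;> obtain ⟨j, hj, hji⟩ := exists_mem_ne hz.2 i <;>
      exact ⟨j, hj, by simp [hji.symm]⟩
  exact trapped_of_step_of_mem_agreeSet hz.1 hj hwl hwr hw

lemma Trapped.ne_pair_negc {c : Bool} {z : Fin n ⊕ Fin n → Bool} (hz : Trapped c z)
    (y : Fin n → Bool) : z ≠ pair y (negc y) :=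
  have ⟨_, hj⟩ := card_pos.1 (by have := hz.2; omega : 0 < #(agreeSet z))
  ne_pair_negc_of_mem_agreeSet hj y

lemma Trapped.of_path {c : Bool} {p : ℕ → Fin n ⊕ Fin n → Bool} {k l : ℕ} (hk : Trapped c (p k))
    (hkl : k ≤ l) (hstep : ∀ m < l, Step (Fext f) (p m) (p (m + 1))) : Trapped c (p l) := by
  induction l, hkl using Nat.le_induction with
  | base => exact hk
  | succ m hkm ih => exact (ih fun j hj => hstep j (by omega)).step (hstep m (by omega))

lemma step_from_pair_negc {x : Fin n → Bool} {z' : Fin n ⊕ Fin n → Bool}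
    (h : Step (Fext f) (pair x (negc x)) z') :
    ∃ i, f x i ≠ x i ∧ (z' = pair (flipAt x i) (negc x) ∨ z' = pair x (flipAt (negc x) i)) := by
  obtain ⟨w, hw, rfl⟩ := h
  rw [Fext_pair_negc] at hw ⊢
  rcases w with i | i
  · refine ⟨i, hw, .inl ?_⟩
    simp only [pair, update_elim_inl, elim_inl] at hw ⊢
    rw [update_eq_flipAt hw]
  · simp only [pair, update_elim_inr, elim_inr] at hw ⊢
    refine ⟨i, by simpa using hw, .inr ?_⟩
    rw [update_eq_flipAt hw]

lemma step_from_pair_flipAt_left (hf : NoNegLoop f) {x : Fin n → Bool} {i : Fin n}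
    (hi : f x i ≠ x i) {z' : Fin n ⊕ Fin n → Bool}
    (h : Step (Fext f) (pair (flipAt x i) (negc x)) z') :
    z' = pair (flipAt x i) (negc (flipAt x i)) ∨ ∃ c, Trapped c z' := by
  obtain ⟨w, hw, rfl⟩ := h
  by_cases hwi : w = inl i ∨ w = inr i
  · rcases hwi with rfl | rfl
    · have : F1 f (flipAt x i) (negc x) i = flipAt x i i := by
        rw [F1_flipAt_left, hf.apply_flipAt hi, flipAt, update_self, Bool.eq_not_iff.2 hi]
      exact absurd this hw
    · left
      simp only [pair, update_elim_inr, elim_inr] at hw ⊢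
      rw [update_eq_flipAt hw, negc_flipAt]
  · rw [not_or] at hwi
    have h := agreeSet_pair_flipAt_left x i
    exact .inr ⟨_, trapped_of_step_of_mem_agreeSet (eachPairHas_of_agreeSet_eq_singleton h)
      (by simp [h]) hwi.1 hwi.2 hw⟩

lemma step_from_pair_flipAt_right (hf : NoNegLoop f) {x : Fin n → Bool} {i : Fin n}
    (hi : f x i ≠ x i) {z' : Fin n ⊕ Fin n → Bool}
    (h : Step (Fext f) (pair x (flipAt (negc x) i)) z') :
    z' = pair (flipAt x i) (negc (flipAt x i)) ∨ ∃ c, Trapped c z' := by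
  obtain ⟨w, hw, rfl⟩ := h
  by_cases hwi : w = inl i ∨ w = inr i
  · rcases hwi with rfl | rfl
    · left
      simp only [pair, update_elim_inl, elim_inl] at hw ⊢
      rw [update_eq_flipAt hw, negc_flipAt]
    · have : F1 f (negc (flipAt (negc x) i)) (negc x) i = f x i := by
        rw [negc_flipAt, negc_negc, F1_flipAt_left, hf.apply_flipAt hi]
      have : Fext f (pair x (flipAt (negc x) i)) (inr i) = flipAt (negc x) i i := by
        show (!F1 f (negc (flipAt (negc x) i)) (negc x) i) = flipAt (negc x) i i
        rw [this, flipAt, update_self, negc_apply, Bool.not_not, Bool.not_eq_iff.2 hi]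
      exact absurd this hw
  · rw [not_or] at hwi
    have h := agreeSet_pair_flipAt_right x i
    exact .inr ⟨_, trapped_of_step_of_mem_agreeSet (eachPairHas_of_agreeSet_eq_singleton h)
      (by simp [h]) hwi.1 hwi.2 hw⟩

lemma eq_two_and_step_of_omegaFree_path (hf : NoNegLoop f) {x y : Fin n → Bool} {l : ℕ}
    {p : ℕ → Fin n ⊕ Fin n → Bool} (hl : 1 ≤ l) (h0 : p 0 = pair x (negc x))
    (hL : p l = pair y (negc y)) (hstep : ∀ k < l, Step (Fext f) (p k) (p (k + 1)))
    (hint : ∀ k, 0 < k → k < l → ¬ ∃ z, p k = pair z (negc z)) :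
    l = 2 ∧ Step f x y ∧ (p 1 = pair y (negc x) ∨ p 1 = pair x (negc y)) := by
  obtain ⟨i, hi, hp1⟩ := step_from_pair_negc (h0 ▸ hstep 0 hl)
  have hl2 : 2 ≤ l := by
    by_contra hl2
    obtain rfl : l = 1 := by omega
    rcases hp1 with h | h <;> rw [h] at hL
    exacts [pair_flipAt_left_ne_pair_negc x i y hL, pair_flipAt_right_ne_pair_negc x i y hL]
  have hp2 : p 2 = pair (flipAt x i) (negc (flipAt x i)) := by
    have h2 : p 2 = pair (flipAt x i) (negc (flipAt x i)) ∨ ∃ c, Trapped c (p 2) := by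
      rcases hp1 with h | h
      · exact step_from_pair_flipAt_left hf hi (h ▸ hstep 1 hl2)
      · exact step_from_pair_flipAt_right hf hi (h ▸ hstep 1 hl2)
    exact h2.resolve_right fun ⟨c, hc⟩ => (hc.of_path hl2 hstep).ne_pair_negc y hL
  obtain rfl : l = 2 := by
    by_contra hne
    exact hint 2 (by omega) (by omega) ⟨_, hp2⟩
  obtain rfl : y = flipAt x i := (Sum.elim_eq_iff.1 (hL.symm.trans hp2)).1
  refine ⟨rfl, ⟨i, hi, (update_eq_flipAt hi).symm⟩, ?_⟩
  rwa [negc_flipAt]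

lemma exists_omegaFree_path_of_step {x y : Fin n → Bool} (h : Step f x y) :
    ∃ (l : ℕ) (p : ℕ → (Fin n ⊕ Fin n) → Bool),
      1 ≤ l ∧ p 0 = pair x (negc x) ∧ p l = pair y (negc y) ∧
      (∀ k < l, Step (Fext f) (p k) (p (k + 1))) ∧
      (∀ k, 0 < k → k < l → ¬ ∃ z, p k = pair z (negc z)) := by
  obtain ⟨i, hi, rfl⟩ := h
  rw [update_eq_flipAt hi]
  have h01 : Step (Fext f) (pair x (negc x)) (pair (flipAt x i) (negc x)) := by
    refine ⟨inl i, ?_, ?_⟩ <;> rw [Fext_pair_negc]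
    · exact hi
    · simp only [pair, update_elim_inl, elim_inl]
      rw [update_eq_flipAt hi]
  have h12 : Step (Fext f) (pair (flipAt x i) (negc x))
      (pair (flipAt x i) (negc (flipAt x i))) := by
    have hF : Fext f (pair (flipAt x i) (negc x)) (inr i) = x i := by
      show (!F1 f (negc (negc x)) (negc (flipAt x i)) i) = x i
      rw [negc_negc, negc_flipAt, F1_flipAt_right, Bool.not_eq_iff.2 hi]
    refine ⟨inr i, ?_, ?_⟩ <;> rw [hF]
    · simp [pair]
    · simp only [pair, update_elim_inr]
      rw [update_eq_flipAt (by simp), negc_flipAt]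
  refine ⟨2, fun
    | 0 => pair x (negc x)
    | 1 => pair (flipAt x i) (negc x)
    | _ => pair (flipAt x i) (negc (flipAt x i)), one_le_two, rfl, rfl, ?_, ?_⟩
  · rintro (_ | _ | k) hk
    exacts [h01, h12, by omega]
  · rintro k hk0 hk2 ⟨z, hz⟩
    obtain rfl : k = 1 := by omega
    exact pair_flipAt_left_ne_pair_negc x i z hz

end

theorem stmt_11 {n : ℕ} (f : (Fin n → Bool) → Fin n → Bool)
    (hf : NoNegLoop f) (x y : Fin n → Bool) :
    (∀ (l : ℕ) (p : ℕ → (Fin n ⊕ Fin n) → Bool),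
        1 ≤ l → p 0 = pair x (negc x) → p l = pair y (negc y) →
        (∀ k < l, Step (Fext f) (p k) (p (k + 1))) →
        (∀ k, 0 < k → k < l → ¬ ∃ z, p k = pair z (negc z)) →
        l = 2 ∧ (p 1 = pair y (negc x) ∨ p 1 = pair x (negc y))) ∧
    ((∃ (l : ℕ) (p : ℕ → (Fin n ⊕ Fin n) → Bool),
        1 ≤ l ∧ p 0 = pair x (negc x) ∧ p l = pair y (negc y) ∧
        (∀ k < l, Step (Fext f) (p k) (p (k + 1))) ∧
        (∀ k, 0 < k → k < l → ¬ ∃ z, p k = pair z (negc z))) ↔ Step f x y) := by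
  refine ⟨fun l p hl h0 hL hstep hint => ?_, fun ⟨l, p, hl, h0, hL, hstep, hint⟩ => ?_,
    exists_omegaFree_path_of_step⟩
  · obtain ⟨hl2, -, hp1⟩ := eq_two_and_step_of_omegaFree_path hf hl h0 hL hstep hint
    exact ⟨hl2, hp1⟩
  · exact (eq_two_and_step_of_omegaFree_path hf hl h0 hL hstep hint).2.1
end
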